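/- A prime q belongs to the sieve set P' if and only if its iterated prime-index depth d(q) is odd; that is, the sieve construction of P' coincides with the alternating-sum construction {p^{(1)}} − {p^{(2)}} + {p^{(3)}} − ..., which retains exactly those primes occurring in an odd number of the higher-order prime subsequences. -/
import Mathlib


/-- `nthPrime n` is the n-th prime with `nthPrime 1 = 2`. -/
noncomputable def nthPrime (n : ℕ) : ℕ := Nat.nth Nat.Prime (n - 1)

/-- 0-indexed index sequence of the sieve: `sieveIdx 0 = k_1 = 1`, and
`sieveIdx n = k_{n+1}` is the least natural number greater than `k_n` that does
not occur among the previously produced values `p'_1, ..., p'_n`. -/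
noncomputable def sieveIdx : ℕ → ℕ
  | 0 => 1
  | n + 1 => sInf {m : ℕ | sieveIdx n < m ∧ ∀ i ≤ n, nthPrime (sieveIdx i) ≠ m}

/-- `pP n = p'_n` (for `n ≥ 1`), the n-th term of the sieve sequence P'. -/
noncomputable def pP (n : ℕ) : ℕ := nthPrime (sieveIdx (n - 1))


lemma primeCounting_lt_self : ∀ q : ℕ, 2 ≤ q → Nat.primeCounting q < q := by
  intro q hq
  induction q with
  | zero => omega
  | succ n ih =>
    rcases Nat.lt_or_ge n 2 with h | h
    · interval_cases n
      · omega
      · decide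
    · have h1 := ih h
      have h2 : Nat.primeCounting (n + 1) ≤ Nat.primeCounting n + 1 := by
        show Nat.count Nat.Prime (n + 1 + 1) ≤ Nat.count Nat.Prime (n + 1) + 1
        rw [Nat.count_succ]
        split <;> omega
      omega

/-- The iterated prime-index depth: `depth q = 1` if `π(q)` is not prime, and
`depth q = 1 + depth (π q)` if `π(q)` is prime. -/
def depth (q : ℕ) : ℕ :=
  if h : (Nat.primeCounting q).Prime then 1 + depth (Nat.primeCounting q) else 1
decreasing_by
  have h2 : 2 ≤ q := by
    by_contra hq
    push_neg at hq
    interval_cases q <;> revert h <;> decide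
  exact primeCounting_lt_self q h2

/-- The sieve set P' = {p'_n : n ≥ 1}. -/
noncomputable def PprimeSet : Set ℕ := Set.range (fun n : ℕ => nthPrime (sieveIdx n))

/- ----- auxiliary lemmas ----- -/

lemma nthPrime_prime (k : ℕ) : (nthPrime k).Prime :=
  Nat.nth_mem_of_infinite Nat.infinite_setOf_prime _

lemma nth_prime_zero' : Nat.nth Nat.Prime 0 = 2 := by
  have h := Nat.nth_count (p := Nat.Prime) (n := 2) (by norm_num)
  have h2 : Nat.count Nat.Prime 2 = 0 := by
    simp [Nat.count_succ, Nat.not_prime_one, Nat.not_prime_zero]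
  rwa [h2] at h

lemma nth_prime_ge (k : ℕ) : k + 2 ≤ Nat.nth Nat.Prime k := by
  induction k with
  | zero => simp [nth_prime_zero']
  | succ n ih =>
    have h : Nat.nth Nat.Prime n < Nat.nth Nat.Prime (n+1) :=
      (Nat.nth_lt_nth Nat.infinite_setOf_prime).2 (Nat.lt_succ_self n)
    omega

lemma lt_nthPrime (k : ℕ) : k < nthPrime k := by
  unfold nthPrime
  rcases k with _ | k
  · simp [nth_prime_zero']
  · have := nth_prime_ge k
    simpa using by omega

lemma sieve_succ_mem (n : ℕ) :
    sieveIdx (n+1) ∈ {m : ℕ | sieveIdx n < m ∧ ∀ i ≤ n, nthPrime (sieveIdx i) ≠ m} := by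
  rw [sieveIdx]
  apply Nat.sInf_mem
  refine ⟨(Finset.range (n+1)).sup (fun i => nthPrime (sieveIdx i)) + sieveIdx n + 1, ?_, ?_⟩
  · omega
  · intro i hi
    have : nthPrime (sieveIdx i) ≤ (Finset.range (n+1)).sup (fun i => nthPrime (sieveIdx i)) :=
      Finset.le_sup (f := fun i => nthPrime (sieveIdx i))
        (Finset.mem_range.mpr (Nat.lt_succ_of_le hi))
    omega

lemma sieveIdx_lt_succ (n : ℕ) : sieveIdx n < sieveIdx (n+1) := (sieve_succ_mem n).1

lemma sieveIdx_strictMono : StrictMono sieveIdx := strictMono_nat_of_lt_succ sieveIdx_lt_succ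

lemma sieveIdx_ge (n : ℕ) : n + 1 ≤ sieveIdx n := by
  induction n with
  | zero => simp [sieveIdx]
  | succ n ih => have := sieveIdx_lt_succ n; omega

/-- The index sequence enumerates exactly those `m ≥ 1` that are not values of `P'`. -/
lemma mem_K_iff (m : ℕ) (hm : 1 ≤ m) :
    (∃ n, sieveIdx n = m) ↔ ∀ j, nthPrime (sieveIdx j) ≠ m := by
  constructor
  · rintro ⟨n, rfl⟩ j
    cases n with
    | zero =>
      have := (nthPrime_prime (sieveIdx j)).two_le
      show nthPrime (sieveIdx j) ≠ sieveIdx 0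
      simp only [sieveIdx]
      omega
    | succ n =>
      rcases le_or_gt j n with hj | hj
      · exact (sieve_succ_mem n).2 j hj
      · have h1 : sieveIdx (n+1) ≤ sieveIdx j := sieveIdx_strictMono.le_iff_le.mpr hj
        have h2 := lt_nthPrime (sieveIdx j)
        omega
  · intro h
    by_contra hne
    push_neg at hne
    have hex : ∃ n, m ≤ sieveIdx n := ⟨m, by have := sieveIdx_ge m; omega⟩
    have hn := Nat.find_spec hex
    set n := Nat.find hex with hdef
    have hlt : m < sieveIdx n := lt_of_le_of_ne hn (Ne.symm (hne n))
    cases hnn : n with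
    | zero =>
      rw [hnn] at hlt
      simp [sieveIdx] at hlt
      omega
    | succ n' =>
      have hmin : ¬ m ≤ sieveIdx n' := Nat.find_min hex (by omega)
      have hle : sieveIdx (n'+1) ≤ m := by
        rw [sieveIdx]
        exact Nat.sInf_le ⟨by omega, fun i _ => h i⟩
      rw [hnn] at hlt
      omega

lemma primeCounting_eq_count_succ (q : ℕ) :
    Nat.primeCounting q = Nat.count Nat.Prime (q + 1) := rfl

lemma primeCounting_nthPrime (k : ℕ) (hk : 1 ≤ k) : Nat.primeCounting (nthPrime k) = k := by
  have hp : Nat.Prime (nthPrime k) := nthPrime_prime k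
  rw [primeCounting_eq_count_succ, Nat.count_succ, if_pos hp]
  show Nat.count Nat.Prime (Nat.nth Nat.Prime (k-1)) + 1 = k
  rw [Nat.count_nth_of_infinite Nat.infinite_setOf_prime]
  omega

lemma nthPrime_primeCounting (q : ℕ) (hq : q.Prime) : nthPrime (Nat.primeCounting q) = q := by
  have h : Nat.primeCounting q = Nat.count Nat.Prime q + 1 := by
    rw [primeCounting_eq_count_succ, Nat.count_succ, if_pos hq]
  rw [h]
  show Nat.nth Nat.Prime (Nat.count Nat.Prime q + 1 - 1) = q
  simpa using Nat.nth_count hq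

lemma primeCounting_pos (q : ℕ) (hq : q.Prime) : 1 ≤ Nat.primeCounting q := by
  rw [primeCounting_eq_count_succ, Nat.count_succ, if_pos hq]; omega

lemma stmt8_aux : ∀ q : ℕ, q.Prime → (q ∈ PprimeSet ↔ Odd (depth q)) := by
  intro q
  induction q using Nat.strong_induction_on with
  | _ q ih =>
    intro hq
    have hk1 : 1 ≤ Nat.primeCounting q := primeCounting_pos q hq
    have hkq : Nat.primeCounting q < q := primeCounting_lt_self q hq.two_le
    have hqk : nthPrime (Nat.primeCounting q) = q := nthPrime_primeCounting q hq
    have hV : q ∈ PprimeSet ↔ ∃ n, sieveIdx n = Nat.primeCounting q := by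
      constructor
      · rintro ⟨n, hn⟩
        refine ⟨n, ?_⟩
        have h := primeCounting_nthPrime (sieveIdx n) (by have := sieveIdx_ge n; omega)
        simp only at hn
        rw [hn] at h
        omega
      · rintro ⟨n, hn⟩
        exact ⟨n, by simp only; rw [hn, hqk]⟩
    rw [hV, mem_K_iff _ hk1]
    by_cases hkp : (Nat.primeCounting q).Prime
    · have hih := ih _ hkq hkp
      have hmem : Nat.primeCounting q ∈ PprimeSet ↔
          ∃ j, nthPrime (sieveIdx j) = Nat.primeCounting q := Set.mem_range
      rw [hmem] at hih
      have hdq : depth q = 1 + depth (Nat.primeCounting q) := by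
        rw [depth, dif_pos hkp]
      rw [hdq]
      constructor
      · intro h
        have : ¬ Odd (depth (Nat.primeCounting q)) := fun ho => by
          obtain ⟨j, hj⟩ := hih.mpr ho
          exact h j hj
        rw [Nat.not_odd_iff_even] at this
        rw [Nat.add_comm]
        exact Even.add_one this
      · intro h j hj
        have ho : Odd (depth (Nat.primeCounting q)) := hih.mp ⟨j, hj⟩
        rw [Nat.add_comm, Nat.odd_add_one] at h
        exact h ho
    · have hdq : depth q = 1 := by rw [depth, dif_neg hkp]
      rw [hdq]
      refine iff_of_true ?_ odd_one
      intro j hj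
      exact hkp (hj ▸ nthPrime_prime (sieveIdx j))

/-- A prime q belongs to the sieve set P' if and only if its iterated
prime-index depth d(q) is odd. -/
theorem stmt8 (q : ℕ) (hq : q.Prime) : q ∈ PprimeSet ↔ Odd (depth q) :=
  stmt8_aux q hq
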